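/- Let s be a normal and regular element of a ring A, S = {sⁿ | n ∈ ℕ}, and A_s the left Ore localization of A at S. Let F = ⊕_{i∈ℕ} A be the free left A-module with basis (e_i)_{i∈ℕ}. Let ∂ : F → F be the left A-linear map determined by ∂(e_i) = e_i − s·e_{i+1} (where s·e_{i+1} denotes the element of F with entry s in coordinate i+1 and 0 elsewhere), and let β : F → A_s be the left A-linear map determined by β(e_i) = s^{−i} (the fraction 1/sⁱ in A_s). Then ∂ is injective, β is surjective, and ker β = im ∂; that is, 0 → F → F → A_s → 0 is a short exact sequence of left A-modules. -/
import Mathlib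


open OreLocalization

universe u

variable {A : Type u} [Ring A]

/-- The left `A`-linear map `∂ : ⊕_{i∈ℕ} A → ⊕_{i∈ℕ} A` determined on the basis `(e_i)` by
`∂ e_i = e_i − s • e_{i+1}` (where `s • e_{i+1}` is the element with entry `s` in coordinate
`i+1` and `0` elsewhere). -/
noncomputable def telDiff (s : A) : (ℕ →₀ A) →ₗ[A] (ℕ →₀ A) :=
  Finsupp.lsum ℕ fun i =>
    LinearMap.toSpanSingleton A (ℕ →₀ A) (Finsupp.single i 1 - Finsupp.single (i + 1) s)

/-- The left `A`-linear map `β : ⊕_{i∈ℕ} A → A_s` determined on the basis `(e_i)` by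
`β e_i = s^{-i}`, the fraction `1 /ₒ sⁱ` in the left Ore localization `A_s`. -/
noncomputable def telBeta (s : A) [OreSet (Submonoid.powers s)] :
    (ℕ →₀ A) →ₗ[A] OreLocalization (Submonoid.powers s) A :=
  Finsupp.lsum ℕ fun i =>
    LinearMap.toSpanSingleton A (OreLocalization (Submonoid.powers s) A)
      ((1 : A) /ₒ ⟨s ^ i, i, rfl⟩)

lemma telDiff_single (s : A) (i : ℕ) (a : A) :
    telDiff s (Finsupp.single i a)
      = Finsupp.single i a - Finsupp.single (i + 1) (a * s) := by
  simp [telDiff, Finsupp.lsum_single, LinearMap.toSpanSingleton_apply, smul_sub,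
    Finsupp.smul_single, smul_eq_mul]

lemma telBeta_single (s : A) [OreSet (Submonoid.powers s)] (i : ℕ) (a : A) :
    telBeta s (Finsupp.single i a)
      = a • ((1 : A) /ₒ (⟨s ^ i, i, rfl⟩ : Submonoid.powers s)) := by
  simp [telBeta, Finsupp.lsum_single, LinearMap.toSpanSingleton_apply]

lemma smul_oneDiv (s : A) [OreSet (Submonoid.powers s)] {n : ℕ} {a b : A}
    (h : s ^ n * a = b * s ^ n) :
    a • ((1 : A) /ₒ (⟨s ^ n, n, rfl⟩ : Submonoid.powers s))
      = b /ₒ (⟨s ^ n, n, rfl⟩ : Submonoid.powers s) := by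
  have h1 := OreLocalization.smul_one_oreDiv_one_smul (M := A)
      (S := Submonoid.powers s) (X := A) a ((1 : A) /ₒ ⟨s ^ n, n, rfl⟩)
  rw [← h1, smul_eq_mul (α := A), mul_one,
    oreDiv_smul_char a (1:A) (1 : Submonoid.powers s) (⟨s ^ n, n, rfl⟩ : Submonoid.powers s) b (⟨s ^ n, n, rfl⟩ : Submonoid.powers s) h]
  simp

lemma pow_norm₁ (s : A) (hnorm₁ : ∀ a : A, ∃ b, s * a = b * s) :
    ∀ (n : ℕ) (a : A), ∃ b, s ^ n * a = b * s ^ n := by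
  intro n
  induction n with
  | zero => intro a; exact ⟨a, by simp⟩
  | succ n ih =>
      intro a
      obtain ⟨b, hb⟩ := hnorm₁ a
      obtain ⟨c, hc⟩ := ih b
      refine ⟨c, ?_⟩
      calc s ^ (n+1) * a = s ^ n * (s * a) := by rw [pow_succ, mul_assoc]
        _ = s ^ n * b * s := by rw [hb, mul_assoc]
        _ = c * s ^ n * s := by rw [hc]
        _ = c * s ^ (n+1) := by rw [mul_assoc, ← pow_succ]

lemma pow_norm₂ (s : A) (hnorm₂ : ∀ a : A, ∃ b, a * s = s * b) :
    ∀ (n : ℕ) (a : A), ∃ b, a * s ^ n = s ^ n * b := by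
  intro n
  induction n with
  | zero => intro a; exact ⟨a, by simp⟩
  | succ n ih =>
      intro a
      obtain ⟨b, hb⟩ := ih a
      obtain ⟨c, hc⟩ := hnorm₂ b
      refine ⟨c, ?_⟩
      calc a * s ^ (n+1) = a * s ^ n * s := by rw [pow_succ, mul_assoc]
        _ = s ^ n * (b * s) := by rw [hb, mul_assoc]
        _ = s ^ n * (s * c) := by rw [hc]
        _ = s ^ (n+1) * c := by rw [← mul_assoc, ← pow_succ]

lemma pow_reg₁ (s : A) (hreg₁ : ∀ a : A, s * a = 0 → a = 0) :
    ∀ (n : ℕ) (a : A), s ^ n * a = 0 → a = 0 := by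
  intro n
  induction n with
  | zero => intro a h; simpa using h
  | succ n ih =>
      intro a h
      rw [pow_succ', mul_assoc] at h
      exact ih a (hreg₁ _ h)

lemma oreDiv_pow_eq_zero (s : A) [OreSet (Submonoid.powers s)]
    (hreg₁ : ∀ a : A, s * a = 0 → a = 0) {n : ℕ} {r : A}
    (h : (r /ₒ (⟨s ^ n, n, rfl⟩ : Submonoid.powers s) :
        OreLocalization (Submonoid.powers s) A) = 0) :
    r = 0 := by
  have h2 : ((s ^ n : A) /ₒ (1 : Submonoid.powers s)) * (r /ₒ (⟨s ^ n, n, rfl⟩ : Submonoid.powers s))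
      = r /ₒ (1 : Submonoid.powers s) := by
    rw [oreDiv_mul_char (s ^ n) r (1 : Submonoid.powers s)
      (⟨s ^ n, n, rfl⟩ : Submonoid.powers s) (1:A) (1 : Submonoid.powers s) (by simp)]
    simp
  rw [h, mul_zero] at h2
  rw [OreLocalization.zero_def] at h2
  obtain ⟨u, v, hu1, hu2⟩ := oreDiv_eq_iff.mp h2.symm
  obtain ⟨m, hm⟩ := u.2
  have hv : (u : A) = v := by simpa using hu2
  have : (u : A) * r = 0 := by
    have := hu1
    rw [Submonoid.smul_def, smul_eq_mul, smul_eq_mul, mul_zero] at this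
    rw [hv, ← this]
  rw [← hm] at this
  exact pow_reg₁ s hreg₁ m r this

lemma oneDiv_succ (s : A) [OreSet (Submonoid.powers s)] (i : ℕ) :
    s • ((1:A) /ₒ (⟨s ^ (i+1), i+1, rfl⟩ : Submonoid.powers s))
      = (1:A) /ₒ (⟨s ^ i, i, rfl⟩ : Submonoid.powers s) := by
  rw [smul_oneDiv s (b := s) (by rw [← pow_succ, ← pow_succ'])]
  have hmem : s * (s ^ i) ∈ Submonoid.powers s := ⟨i + 1, pow_succ' s i⟩
  have h1 := OreLocalization.expand (1 : A) (⟨s ^ i, i, rfl⟩ : Submonoid.powers s) s hmem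
  rw [h1, smul_eq_mul, mul_one]
  congr 1
  exact Subtype.ext (pow_succ' s i)

noncomputable def telShift (s : A) : (ℕ →₀ A) →ₗ[A] (ℕ →₀ A) :=
  (Finsupp.lmapDomain A A (· + 1)).comp
    (Finsupp.mapRange.linearMap (LinearMap.toSpanSingleton A A s))

lemma telDiff_eq (s : A) : telDiff s = LinearMap.id - telShift s := by
  apply Finsupp.lhom_ext
  intro i a
  rw [telDiff_single, LinearMap.sub_apply, LinearMap.id_apply]
  congr 1
  rw [telShift, LinearMap.comp_apply, Finsupp.mapRange.linearMap_apply,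
    Finsupp.mapRange_single, Finsupp.lmapDomain_apply, Finsupp.mapDomain_single,
    LinearMap.toSpanSingleton_apply, smul_eq_mul]

lemma step_mem (s : A) (i k : ℕ) (a : A) :
    (Finsupp.single i a - Finsupp.single (i + k) (a * s ^ k) : ℕ →₀ A)
      ∈ LinearMap.range (telDiff s) := by
  induction k with
  | zero => simpa using Submodule.zero_mem _
  | succ k ih =>
      have h2 : (Finsupp.single (i+k) (a * s ^ k)
            - Finsupp.single (i+k+1) ((a * s ^ k) * s) : ℕ →₀ A)
          ∈ LinearMap.range (telDiff s) :=
        ⟨Finsupp.single (i+k) (a * s ^ k), telDiff_single s _ _⟩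
      have h3 := Submodule.add_mem _ ih h2
      rw [sub_add_sub_cancel] at h3
      have he : (i + k + 1) = i + (k + 1) := by omega
      rw [he, mul_assoc, ← pow_succ] at h3
      exact h3

lemma beta_diff (s : A) [OreSet (Submonoid.powers s)] (f : ℕ →₀ A) :
    telBeta s (telDiff s f) = 0 := by
  have h : (telBeta s).comp (telDiff s) = 0 := by
    apply Finsupp.lhom_ext
    intro i a
    simp only [LinearMap.comp_apply, LinearMap.zero_apply, telDiff_single, map_sub,
      telBeta_single]
    rw [← oneDiv_succ s i, ← mul_smul, ← smul_eq_mul, sub_self]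
  exact congrFun (congrArg (fun g => g.toFun) h) f

/-- Let `s` be a normal and regular element of a ring `A`, `S = {sⁿ}` (a left denominator
set, encoded by the `OreSet` instance), and `A_s` the left Ore localization of `A` at `S`.
Let `F = ⊕_{i∈ℕ} A` be free on the basis `(e_i)`, let `∂ : F → F` be determined by
`∂ e_i = e_i − s • e_{i+1}` and `β : F → A_s` by `β e_i = s^{-i}`.  Then `∂` is injective,
`β` is surjective, and `ker β = im ∂`: `0 → F → F → A_s → 0` is a short exact sequence of
left `A`-modules. -/
theorem telescope_resolution_of_ore_localization
    (s : A) [OreSet (Submonoid.powers s)]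
    (hnorm₁ : ∀ a : A, ∃ b, s * a = b * s)
    (hnorm₂ : ∀ a : A, ∃ b, a * s = s * b)
    (hreg₁ : ∀ a : A, s * a = 0 → a = 0)
    (hreg₂ : ∀ a : A, a * s = 0 → a = 0) :
    Function.Injective (telDiff s) ∧
    Function.Surjective (telBeta s) ∧
    LinearMap.ker (telBeta s) = LinearMap.range (telDiff s) := by
  have hker0 : ∀ f : ℕ →₀ A, telDiff s f = 0 → f = 0 := by
    intro f hf
    rw [telDiff_eq, LinearMap.sub_apply, LinearMap.id_apply, sub_eq_zero] at hf
    have h0 : f 0 = 0 := by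
      conv_lhs => rw [hf]
      rw [telShift, LinearMap.comp_apply, Finsupp.lmapDomain_apply]
      exact Finsupp.mapDomain_notin_range _ _ (by simp)
    have hsucc : ∀ j, f (j + 1) = f j * s := by
      intro j
      conv_lhs => rw [hf]
      rw [telShift, LinearMap.comp_apply, Finsupp.lmapDomain_apply]
      have hinj : Function.Injective (fun x : ℕ => x + 1) := add_left_injective 1
      have := Finsupp.mapDomain_apply hinj
        (Finsupp.mapRange.linearMap (LinearMap.toSpanSingleton A A s) f) j
      rw [this, Finsupp.mapRange.linearMap_apply, Finsupp.mapRange_apply,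
        LinearMap.toSpanSingleton_apply, smul_eq_mul]
    have haux : ∀ j, f j = 0 := by
      intro j
      induction j with
      | zero => exact h0
      | succ j ih => rw [hsucc, ih, zero_mul]
    ext j
    simp [haux j]
  have hinj : Function.Injective (telDiff s) := by
    intro x y hxy
    exact sub_eq_zero.mp (hker0 (x - y) (by rw [map_sub, hxy, sub_self]))
  have hsurj : Function.Surjective (telBeta s) := by
    intro x
    induction x using OreLocalization.ind with
    | _ r t =>
      obtain ⟨n, hn⟩ := t.2
      obtain ⟨b, hb⟩ := pow_norm₂ s hnorm₂ n r
      refine ⟨Finsupp.single n b, ?_⟩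
      have ht : t = (⟨s ^ n, n, rfl⟩ : Submonoid.powers s) := Subtype.ext hn.symm
      rw [ht, telBeta_single, smul_oneDiv s hb.symm]
  have hrange_ker : ∀ f : ℕ →₀ A, f ∈ LinearMap.range (telDiff s) → telBeta s f = 0 := by
    rintro f ⟨g, rfl⟩; exact beta_diff s g
  refine ⟨hinj, hsurj, ?_⟩
  ext f
  simp only [LinearMap.mem_ker]
  constructor
  · intro hf
    set N := f.support.sup id with hN
    set c : A := ∑ i ∈ f.support, f i * s ^ (N - i) with hc
    have hsub : (f - Finsupp.single N c : ℕ →₀ A) ∈ LinearMap.range (telDiff s) := by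
      have h1 : (f : ℕ →₀ A) = ∑ i ∈ f.support, Finsupp.single i (f i) :=
        (Finsupp.sum_single f).symm
      have h2 : Finsupp.single N c = ∑ i ∈ f.support, Finsupp.single N (f i * s ^ (N - i)) := by
        rw [hc, Finsupp.single_finset_sum]
      have h3 : (f - Finsupp.single N c : ℕ →₀ A)
          = ∑ i ∈ f.support,
              (Finsupp.single i (f i) - Finsupp.single N (f i * s ^ (N - i))) := by
        rw [Finset.sum_sub_distrib, ← h1, ← h2]
      rw [h3]
      apply Submodule.sum_mem
      intro i hi
      have hiN : i ≤ N := Finset.le_sup (f := id) hi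
      have := step_mem s i (N - i) (f i)
      rwa [Nat.add_sub_cancel' hiN] at this
    have hβ : telBeta s (Finsupp.single N c) = 0 := by
      have he : Finsupp.single N c = f - (f - Finsupp.single N c) := by abel
      rw [he, map_sub, hf, hrange_ker _ hsub, sub_zero]
    obtain ⟨b, hb⟩ := pow_norm₁ s hnorm₁ N c
    rw [telBeta_single, smul_oneDiv s hb] at hβ
    have hb0 : b = 0 := oreDiv_pow_eq_zero s hreg₁ hβ
    have hc0 : c = 0 := pow_reg₁ s hreg₁ N c (by rw [hb, hb0, zero_mul])
    have hfe : f = f - Finsupp.single N c := by rw [hc0, Finsupp.single_zero, sub_zero]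
    rw [hfe]; exact hsub
  · intro hf
    exact hrange_ker f hf
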